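/- arXiv:1509.03485 — 2 statements merged into one kernel-verified Lean document; each statement's English description precedes it below -/
import Mathlib

section
/- Fix real ω with e^{iω} ≠ 1, and let c̃_k(ω) be the Taylor coefficients of z ↦ 1/(1 - e^{z+iω}) at z = 0, i.e. 1/(1 - e^{z+iω}) = Σ_{k≥0} c̃_k(ω) z^k for |z| small. Then the function - sinh z / (2(cosh z - cos ω)) has Taylor expansion at 0 containing only odd powers of z, with coefficients c̃_{2k+1}(ω); in particular, c̃_{2k+1}(ω) is real for every k ≥ 0. -/
/-!
With `f z = 1 / (1 - exp (z + iω))`, the odd part `(f z - f (-z)) / 2` equals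
`-sinh z / (2 (cosh z - cos ω))`, and its Taylor series is the odd part of that of `f`.
Since `ω` is real this function `g` satisfies `conj (g (conj z)) = g z`, so by uniqueness of
Taylor coefficients they equal their own conjugates.
-/

open Complex ComplexConjugate Filter Topology FormalMultilinearSeries

theorem hasSum_comp_two_mul_add_one_iff {α : Type*} [AddCommMonoid α] [TopologicalSpace α]
    {f : ℕ → α} {s : α} (hf : ∀ n, Even n → f n = 0) :
    HasSum (fun k => f (2 * k + 1)) s ↔ HasSum f s := by
  refine Function.Injective.hasSum_iff (g := fun k => 2 * k + 1)
    (fun j k h => by simp only at h; omega) fun n hn => hf n ?_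
  rcases Nat.even_or_odd n with h | ⟨m, rfl⟩
  · exact h
  · exact absurd ⟨m, rfl⟩ hn

theorem hasSum_ite_odd_mul_pow {R : Type*} [Semiring R] [TopologicalSpace R] {b : ℕ → R}
    {z s : R} (h : HasSum (fun k => b (2 * k + 1) * z ^ (2 * k + 1)) s) :
    HasSum (fun n => (if Odd n then b n else 0) * z ^ n) s :=
  (hasSum_comp_two_mul_add_one_iff fun n hn => by simp [Nat.not_odd_iff_even.mpr hn]).mp
    (by simpa using h)

theorem hasSum_odd_of_hasSum_of_hasSum_neg {𝕜 : Type*} [Field 𝕜] [CharZero 𝕜]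
    [TopologicalSpace 𝕜] [IsTopologicalRing 𝕜] {a : ℕ → 𝕜} {z s t : 𝕜}
    (hs : HasSum (fun n => a n * z ^ n) s) (ht : HasSum (fun n => a n * (-z) ^ n) t) :
    HasSum (fun k => a (2 * k + 1) * z ^ (2 * k + 1)) ((s - t) / 2) := by
  have h := (hasSum_comp_two_mul_add_one_iff (f := fun n => (a n * z ^ n - a n * (-z) ^ n) / 2)
    fun n hn => by simp [hn.neg_pow]).mpr ((hs.sub ht).div_const 2)
  refine h.congr_fun fun k => ?_
  rw [(odd_two_mul_add_one k).neg_pow]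
  ring

theorem hasFPowerSeriesAt_ofScalars_of_hasSum {𝕜 : Type*} [RCLike 𝕜] {a : ℕ → 𝕜}
    {g : 𝕜 → 𝕜} {r : ℝ} (hr : 0 < r)
    (ha : ∀ z : 𝕜, ‖z‖ < r → HasSum (fun n => a n * z ^ n) (g z)) :
    HasFPowerSeriesAt g (ofScalars 𝕜 a) 0 := by
  obtain ⟨ρ, hρ0, hρr⟩ := exists_between hr
  lift ρ to NNReal using hρ0.le
  refine ⟨ρ, ?_, by simpa using hρ0, fun {y} hy => ?_⟩
  · apply le_radius_of_summable
    simpa [ofScalars_norm] using (ha ((ρ : ℝ) : 𝕜) (by simpa using hρr)).summable.norm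
  · rw [Metric.eball_coe, mem_ball_zero_iff] at hy
    simpa [ofScalars_apply_eq, mul_comm] using ha y (hy.trans hρr)

theorem im_eq_zero_of_hasSum_of_conj_symm {a : ℕ → ℂ} {g : ℂ → ℂ} {r : ℝ} (hr : 0 < r)
    (ha : ∀ z : ℂ, ‖z‖ < r → HasSum (fun n => a n * z ^ n) (g z))
    (hg : ∀ z, conj (g (conj z)) = g z) (n : ℕ) : (a n).im = 0 := by
  have ha' : ∀ z : ℂ, ‖z‖ < r → HasSum (fun n => conj (a n) * z ^ n) (g z) := fun z hz =>
    by simpa [hg] using Complex.hasSum_conj'.mpr (ha (conj z) (by simpa using hz))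
  have hcoeff : a = fun n => conj (a n) := ofScalars_series_injective ℂ ℂ <|
    (hasFPowerSeriesAt_ofScalars_of_hasSum hr ha).eq_formalMultilinearSeries
      (hasFPowerSeriesAt_ofScalars_of_hasSum hr ha')
  exact conj_eq_iff_im.mp (congrFun hcoeff n).symm

theorem eventually_exp_add_ne_one {w : ℂ} (hw : exp w ≠ 1) :
    ∀ᶠ z in 𝓝 0, exp (z + w) ≠ 1 :=
  (continuous_exp.comp (continuous_add_const w)).continuousAt.eventually_ne (by simpa using hw)

theorem one_sub_exp_add_mul_one_sub_exp_neg_add (z w : ℂ) :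
    (1 - exp (z + w)) * (1 - exp (-z + w)) = 2 * exp w * (cosh w - cosh z) := by
  simp only [cosh, exp_add, exp_neg]
  field_simp
  ring

theorem one_div_one_sub_exp_add_sub_neg (z w : ℂ) (h₁ : exp (z + w) ≠ 1)
    (h₂ : exp (-z + w) ≠ 1) :
    (1 / (1 - exp (z + w)) - 1 / (1 - exp (-z + w))) / 2 =
      -sinh z / (2 * (cosh z - cosh w)) := by
  have hprod := one_sub_exp_add_mul_one_sub_exp_neg_add z w
  have h₁' : 1 - exp (z + w) ≠ 0 := sub_ne_zero.mpr h₁.symm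
  have h₂' : 1 - exp (-z + w) ≠ 0 := sub_ne_zero.mpr h₂.symm
  have hnum : 1 * (1 - exp (-z + w)) - (1 - exp (z + w)) * 1 = 2 * exp w * sinh z := by
    simp only [sinh, exp_add, exp_neg]
    ring
  have hd : cosh w - cosh z ≠ 0 := by
    intro h
    rw [h, mul_zero] at hprod
    exact mul_ne_zero h₁' h₂' hprod
  rw [div_sub_div _ _ h₁' h₂', hnum, hprod, ← neg_sub (cosh w)]
  field_simp [exp_ne_zero w]

theorem conj_neg_sinh_div_cosh_sub (t : ℝ) (z : ℂ) :
    conj (-sinh (conj z) / (2 * (cosh (conj z) - t))) = -sinh z / (2 * (cosh z - t)) := by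
  simp [← sinh_conj, ← cosh_conj, map_ofNat]

theorem stmt_10 (ω : ℝ) (hω : Complex.exp (Complex.I * ω) ≠ 1)
    (c : ℕ → ℂ) (r : ℝ) (hr : 0 < r)
    (hc : ∀ z : ℂ, ‖z‖ < r →
      HasSum (fun k : ℕ => c k * z ^ k) (1 / (1 - Complex.exp (z + Complex.I * ω)))) :
    (∃ r' > 0, ∀ z : ℂ, ‖z‖ < r' →
        HasSum (fun k : ℕ => c (2 * k + 1) * z ^ (2 * k + 1))
          (- Complex.sinh z / (2 * (Complex.cosh z - Complex.cos ω))))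
      ∧ ∀ k : ℕ, (c (2 * k + 1)).im = 0 := by
  obtain ⟨δ, hδ, hexp⟩ := Metric.eventually_nhds_iff.mp (eventually_exp_add_ne_one hω)
  have hr' : 0 < min r δ := lt_min hr hδ
  have hodd : ∀ z : ℂ, ‖z‖ < min r δ → HasSum (fun k => c (2 * k + 1) * z ^ (2 * k + 1))
      (-sinh z / (2 * (cosh z - cos ω))) := by
    intro z hz
    have hzr : ‖z‖ < r := hz.trans_le (min_le_left _ _)
    have hzδ : ‖z‖ < δ := hz.trans_le (min_le_right _ _)
    rw [← cosh_mul_I, mul_comm (ω : ℂ), ← one_div_one_sub_exp_add_sub_neg z _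
      (hexp (by simpa using hzδ)) (hexp (by simpa using hzδ))]
    exact hasSum_odd_of_hasSum_of_hasSum_neg (hc z hzr) (hc (-z) (by rwa [norm_neg]))
  refine ⟨⟨min r δ, hr', hodd⟩, fun k => ?_⟩
  have hreal := im_eq_zero_of_hasSum_of_conj_symm hr'
    (fun z hz => hasSum_ite_odd_mul_pow (hodd z hz))
    (fun z => by rw [← ofReal_cos, conj_neg_sinh_div_cosh_sub]) (2 * k + 1)
  simpa using hreal
end

section
/- Fix real ω with e^{iω} ≠ 1, and define c̃_k(ω) by 1/(1 - e^{z+iω}) = Σ_{k≥0} c̃_k(ω) z^k near z = 0. Then for each k ≥ 1, the coefficient c̃_{2k}(ω) is purely imaginary (its real part is zero), and c̃_0(ω) has real part 1/2. -/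
/-!
For real `x`, conjugating the expansion at `-x` and adding it to the expansion at `x` gives
`∑ (c k + (-1)^k conj (c k)) x^k = 1/(1 - u) + 1/(1 - u⁻¹) = 1` with `u = e^{x + iω}`.
By uniqueness of power series coefficients, `c k + (-1)^k conj (c k)` vanishes for `k ≥ 1`
and equals `1` for `k = 0`; at even `k` this is `2 Re (c k)`.
-/

open Complex ComplexConjugate

section PowerSeries

variable {𝕜 E : Type*} [NontriviallyNormedField 𝕜] [NormedAddCommGroup E] [NormedSpace 𝕜 E]

theorem hasFPowerSeriesAt_of_hasSum_pow_smul {a : ℕ → E} {f : 𝕜 → E} {r : ℝ} (hr : 0 < r)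
    (h : ∀ x : 𝕜, ‖x‖ < r → HasSum (fun k => x ^ k • a k) (f x)) :
    HasFPowerSeriesAt f (fun k => ContinuousMultilinearMap.mkPiRing 𝕜 (Fin k) (a k)) 0 := by
  -- `𝕜` need not be densely normed, so we work on the ball of radius `‖x‖` for some `‖x‖ < r`.
  obtain ⟨x, hx0, hxr⟩ := NormedField.exists_norm_lt 𝕜 hr
  refine ⟨‖x‖₊, ⟨?_, by simpa using hx0, fun {y} hy => ?_⟩⟩
  · refine FormalMultilinearSeries.le_radius_of_tendsto _ (l := 0) ?_
    simpa [norm_smul, mul_comm] using (h x hxr).summable.tendsto_atTop_zero.norm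
  · have hyr : ‖y‖ < r := (by simpa using hy : ‖y‖ < ‖x‖).trans hxr
    simpa [ContinuousMultilinearMap.mkPiRing_apply] using h y hyr

theorem eq_of_hasSum_pow_smul {a b : ℕ → E} {f : 𝕜 → E} {r : ℝ} (hr : 0 < r)
    (ha : ∀ x : 𝕜, ‖x‖ < r → HasSum (fun k => x ^ k • a k) (f x))
    (hb : ∀ x : 𝕜, ‖x‖ < r → HasSum (fun k => x ^ k • b k) (f x)) : a = b := by
  funext k
  have hab := (hasFPowerSeriesAt_of_hasSum_pow_smul hr ha).eq_formalMultilinearSeries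
    (hasFPowerSeriesAt_of_hasSum_pow_smul hr hb)
  exact ContinuousMultilinearMap.mkPiRing_eq_iff.1 (congrFun hab k)

end PowerSeries

theorem one_div_one_sub_add_one_div_one_sub_inv {K : Type*} [Field K] {u : K} (h0 : u ≠ 0)
    (h1 : u ≠ 1) : 1 / (1 - u) + 1 / (1 - u⁻¹) = 1 := by
  have : 1 - u ≠ 0 := sub_ne_zero.2 h1.symm
  field_simp
  ring

theorem exp_ofReal_add_ne_one {ω : ℝ} (hω : exp (I * ω) ≠ 1) (x : ℝ) : exp (x + I * ω) ≠ 1 := by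
  intro h
  have hx : Real.exp x = 1 := by simpa [Complex.norm_exp] using congrArg norm h
  rw [Real.exp_eq_one_iff] at hx
  simp only [hx, ofReal_zero, zero_add] at h
  exact hω h

theorem one_div_one_sub_exp_add_conj_neg {ω : ℝ} (hω : exp (I * ω) ≠ 1) (x : ℝ) :
    1 / (1 - exp (x + I * ω)) + conj (1 / (1 - exp (-x + I * ω))) = 1 := by
  have hconj : conj (exp (-x + I * ω)) = (exp (x + I * ω))⁻¹ := by
    rw [← exp_conj, ← exp_neg]
    congr 1
    simp only [map_add, map_neg, conj_ofReal, map_mul, conj_I]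
    ring
  rw [map_div₀, map_one, map_sub, map_one, hconj]
  exact one_div_one_sub_add_one_div_one_sub_inv (exp_ne_zero _) (exp_ofReal_add_ne_one hω x)

theorem hasSum_add_neg_one_pow_mul_conj {ω : ℝ} (hω : exp (I * ω) ≠ 1) {c : ℕ → ℂ} {r : ℝ}
    (hc : ∀ z : ℂ, ‖z‖ < r → HasSum (fun k => c k * z ^ k) (1 / (1 - exp (z + I * ω))))
    {x : ℝ} (hx : ‖x‖ < r) :
    HasSum (fun k => x ^ k • (c k + (-1) ^ k * conj (c k))) 1 := by
  have hpos := hc x (by simpa using hx)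
  have hneg := (hc (-x) (by simpa using hx)).star
  convert hpos.add hneg using 1
  · funext k
    rw [Complex.real_smul, star_mul', star_pow, star_neg, Complex.star_def, conj_ofReal, neg_pow]
    push_cast
    ring
  · exact (one_div_one_sub_exp_add_conj_neg hω x).symm

theorem stmt_12 (ω : ℝ) (hω : Complex.exp (Complex.I * ω) ≠ 1)
    (c : ℕ → ℂ) (r : ℝ) (hr : 0 < r)
    (hc : ∀ z : ℂ, ‖z‖ < r →
      HasSum (fun k : ℕ => c k * z ^ k) (1 / (1 - Complex.exp (z + Complex.I * ω)))) :
    (∀ k : ℕ, 1 ≤ k → (c (2 * k)).re = 0) ∧ (c 0).re = 1 / 2 := by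
  have hcoeff : (fun k => c k + (-1) ^ k * conj (c k)) = Pi.single 0 (1 : ℂ) :=
    eq_of_hasSum_pow_smul (𝕜 := ℝ) hr (fun x hx => hasSum_add_neg_one_pow_mul_conj hω hc hx)
      fun x _ => by
        simpa using hasSum_single (f := fun k => x ^ k • (Pi.single 0 1 : ℕ → ℂ) k) 0
          fun k hk => by simp [hk]
  constructor
  · intro k hk
    have h := congrFun hcoeff (2 * k)
    simp only [pow_mul, neg_one_sq, one_pow, one_mul, Complex.add_conj] at h
    rw [Pi.single_eq_of_ne (by omega)] at h
    exact_mod_cast (mul_eq_zero.1 (ofReal_eq_zero.1 h)).resolve_left two_ne_zero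
  · have h := congrFun hcoeff 0
    simp only [pow_zero, one_mul, Pi.single_eq_same, Complex.add_conj] at h
    have := congrArg re h
    simp only [ofReal_re, one_re] at this
    linarith
end
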